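/- For all λ > 0 and τ > 0, (1+τ)^{-1} ∫₀^∞ exp( −2πλ ∫_h^∞ (τ h⁴ u)/(u⁴ + τ h⁴) du ) · 4πλ^{3/2} h² e^{−λπh²} dh = (1+τ)^{-1} (1 + √τ · arctan(√τ))^{−3/2}; in particular the left-hand side does not depend on λ. -/

import Mathlib

/-!
With `c = √τ h²` the interference exponent is `∫_h^∞ c² u/(u⁴ + c²) du`, whose antiderivative
`(c/2) arctan(u²/c)` gives `(√τ arctan √τ / 2) h²`. The integrand in `h` thus collapses to a single
Gaussian `4πλ^{3/2} h² exp(-b h²)` with `b = λπ(1 + √τ arctan √τ)`, and the second moment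
`∫₀^∞ h² exp(-b h²) dh = √π/4 · b^{-3/2}` cancels every power of `λπ`.
-/

open MeasureTheory Set Real

lemma integral_Ioi_sq_mul_div_pow_four_add_sq {a c : ℝ} (ha : 0 ≤ a) (hc : 0 < c) :
    ∫ u in Ioi a, c ^ 2 * u / (u ^ 4 + c ^ 2) = c / 2 * (π / 2 - arctan (a ^ 2 / c)) := by
  set F : ℝ → ℝ := fun u => c / 2 * arctan (u ^ 2 / c)
  have hF_deriv (u : ℝ) : HasDerivAt F (c ^ 2 * u / (u ^ 4 + c ^ 2)) u := by
    have h_inner : HasDerivAt (fun u : ℝ => u ^ 2 / c) (2 * u / c) u := by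
      simpa using (hasDerivAt_pow 2 u).div_const c
    refine (((hasDerivAt_arctan _).comp u h_inner).const_mul (c / 2)).congr_deriv ?_
    field_simp
    ring
  have hF_cont : ContinuousWithinAt F (Ici a) a := by fun_prop
  have hF_lim : Filter.Tendsto F Filter.atTop (nhds (c / 2 * (π / 2))) :=
    ((tendsto_arctan_atTop.mono_right nhdsWithin_le_nhds).comp
      ((Filter.tendsto_pow_atTop two_ne_zero).atTop_div_const hc)).const_mul _
  have h_nonneg : ∀ u ∈ Ioi a, 0 ≤ c ^ 2 * u / (u ^ 4 + c ^ 2) := fun u hu => by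
    have : 0 < u := ha.trans_lt hu
    positivity
  rw [integral_Ioi_of_hasDerivAt_of_nonneg hF_cont (fun u _ => hF_deriv u) h_nonneg hF_lim]
  ring

lemma integral_Ioi_mul_pow_four_mul_div_pow_four_add {τ h : ℝ} (hτ : 0 < τ) (hh : 0 < h) :
    ∫ u in Ioi h, τ * h ^ 4 * u / (u ^ 4 + τ * h ^ 4) = √τ * arctan √τ / 2 * h ^ 2 := by
  have hsqrt : 0 < √τ := sqrt_pos.mpr hτ
  have hsq : (√τ * h ^ 2) ^ 2 = τ * h ^ 4 := by rw [mul_pow, sq_sqrt hτ.le]; ring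
  have hratio : h ^ 2 / (√τ * h ^ 2) = (√τ)⁻¹ := by field_simp
  rw [← hsq, integral_Ioi_sq_mul_div_pow_four_add_sq hh.le (by positivity), hratio,
    arctan_inv_of_pos hsqrt]
  ring

lemma integral_Ioi_sq_mul_exp_neg_mul_sq {b : ℝ} (hb : 0 < b) :
    ∫ x in Ioi (0 : ℝ), x ^ 2 * exp (-b * x ^ 2) = √π / 4 * b ^ (-(3 : ℝ) / 2) := by
  have hGamma : Gamma (3 / 2) = √π / 2 := by
    rw [show (3 : ℝ) / 2 = 1 / 2 + 1 by norm_num, Gamma_add_one one_half_pos.ne',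
      Gamma_one_half_eq]
    ring
  have h := integral_rpow_mul_exp_neg_mul_rpow two_pos (by norm_num : (-1 : ℝ) < 2) hb
  simp only [rpow_two] at h
  rw [h, show ((2 : ℝ) + 1) / 2 = 3 / 2 by norm_num, show -((2 : ℝ) + 1) / 2 = -3 / 2 by norm_num,
    hGamma]
  ring

lemma pi_mul_sqrt_pi : π * √π = π ^ ((3 : ℝ) / 2) := by
  rw [sqrt_eq_rpow, show (3 : ℝ) / 2 = 1 + 1 / 2 by norm_num, rpow_add pi_pos, rpow_one]

theorem stmt_1 (lam τ : ℝ) (hlam : 0 < lam) (hτ : 0 < τ) :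
    (1 + τ)⁻¹ *
        ∫ h in Ioi (0:ℝ),
          Real.exp (-(2 * Real.pi * lam * ∫ u in Ioi h, τ * h ^ 4 * u / (u ^ 4 + τ * h ^ 4))) *
            (4 * Real.pi * lam ^ ((3:ℝ)/2) * h ^ 2 * Real.exp (-(lam * Real.pi * h ^ 2))) =
      (1 + τ)⁻¹ * (1 + Real.sqrt τ * Real.arctan (Real.sqrt τ)) ^ (-(3:ℝ)/2) := by
  have h_integrand : ∀ h ∈ Ioi (0 : ℝ),
      exp (-(2 * π * lam * ∫ u in Ioi h, τ * h ^ 4 * u / (u ^ 4 + τ * h ^ 4))) *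
          (4 * π * lam ^ ((3 : ℝ) / 2) * h ^ 2 * exp (-(lam * π * h ^ 2))) =
        4 * π * lam ^ ((3 : ℝ) / 2) *
          (h ^ 2 * exp (-(lam * π * (1 + √τ * arctan √τ)) * h ^ 2)) := by
    intro h hh
    rw [integral_Ioi_mul_pow_four_mul_div_pow_four_add hτ hh, mul_comm, mul_assoc, ← exp_add]
    ring_nf
  rw [setIntegral_congr_fun measurableSet_Ioi h_integrand, integral_const_mul,
    integral_Ioi_sq_mul_exp_neg_mul_sq (by positivity)]
  congr 1
  have hlampi : 0 < lam * π := mul_pos hlam pi_pos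
  calc 4 * π * lam ^ ((3 : ℝ) / 2) *
        (√π / 4 * (lam * π * (1 + √τ * arctan √τ)) ^ (-(3 : ℝ) / 2))
      = (lam * π) ^ ((3 : ℝ) / 2) * (lam * π * (1 + √τ * arctan √τ)) ^ (-(3 : ℝ) / 2) := by
        rw [mul_rpow hlam.le pi_pos.le, ← pi_mul_sqrt_pi]
        ring
    _ = (1 + √τ * arctan √τ) ^ (-(3 : ℝ) / 2) := by
        rw [mul_rpow hlampi.le (by positivity), ← mul_assoc, ← rpow_add hlampi]
        norm_num
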